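/- Define κ_α : ℂⁿ → Hermitian n×n matrices by κ_α(x) = (1/‖x‖) x x* for x ≠ 0 and κ_α(0) = 0. Then for all x, y ∈ ℂⁿ, D₂(x,y) ≤ ‖κ_α(x) − κ_α(y)‖_F ≤ √2 · D₂(x,y), where ‖·‖_F is the Frobenius (Hilbert–Schmidt) norm; i.e., κ_α is bi-Lipschitz from (ℂⁿ/∼, D₂) onto the rank-at-most-one positive semidefinite matrices with lower Lipschitz constant 1 and upper Lipschitz constant √2. -/

import Mathlib

open Matrix Finset

/-- Standard inner product on `ℂⁿ`, linear in the first argument. -/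
noncomputable def cip {n : ℕ} (x y : Fin n → ℂ) : ℂ := ∑ i, x i * starRingEnd ℂ (y i)

/-- Squared Euclidean norm on `ℂⁿ`. -/
noncomputable def cnormSq {n : ℕ} (x : Fin n → ℂ) : ℝ := ∑ i, Complex.normSq (x i)

/-- The natural metric `D₂(x,y) = √(‖x‖² + ‖y‖² − 2|⟨x,y⟩|)` on `ℂⁿ/∼`. -/
noncomputable def D2 {n : ℕ} (x y : Fin n → ℂ) : ℝ :=
  Real.sqrt (cnormSq x + cnormSq y - 2 * ‖cip x y‖)

/-- Frobenius (Hilbert–Schmidt) norm of a complex matrix. -/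
noncomputable def frob {n : ℕ} (A : Matrix (Fin n) (Fin n) ℂ) : ℝ :=
  Real.sqrt (∑ i, ∑ j, Complex.normSq (A i j))

/-- The map `κ_α(x) = xx*/‖x‖` (and `κ_α(0) = 0`). -/
noncomputable def kappaAlpha {n : ℕ} (x : Fin n → ℂ) : Matrix (Fin n) (Fin n) ℂ :=
  if x = 0 then 0
  else ((Real.sqrt (cnormSq x))⁻¹ : ℝ) • Matrix.vecMulVec x (star x)

/-! With `a = ‖x‖`, `b = ‖y‖` and `t = |⟨x,y⟩|`, expanding the Frobenius norm of a difference of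
rank-one matrices gives `‖κ_α(x) − κ_α(y)‖_F² = a² + b² − 2t²/(ab)`, while `D₂(x,y)² = a² + b² − 2t`.
Cauchy–Schwarz `t ≤ ab` gives `t²/(ab) ≤ t`, hence the lower bound. The upper bound amounts to
`4t ≤ a² + b² + 2t²/(ab)`, which follows from `a² + b² ≥ 2ab` and
`2ab + 2t²/(ab) − 4t = 2(ab − t)²/(ab) ≥ 0`. -/

lemma cnormSq_nonneg {n : ℕ} (x : Fin n → ℂ) : 0 ≤ cnormSq x :=
  Finset.sum_nonneg fun _ _ => Complex.normSq_nonneg _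

lemma cnormSq_eq_norm_sq {n : ℕ} (x : Fin n → ℂ) :
    cnormSq x = ‖(WithLp.toLp 2 x : EuclideanSpace ℂ (Fin n))‖ ^ 2 := by
  simp [EuclideanSpace.norm_sq_eq, cnormSq, Complex.normSq_eq_norm_sq]

lemma cip_eq_inner {n : ℕ} (x y : Fin n → ℂ) :
    cip x y = inner ℂ (WithLp.toLp 2 y : EuclideanSpace ℂ (Fin n)) (WithLp.toLp 2 x) := by
  simp [cip, PiLp.inner_apply]

lemma norm_cip_le {n : ℕ} (x y : Fin n → ℂ) :
    ‖cip x y‖ ≤ √(cnormSq x) * √(cnormSq y) := by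
  rw [cip_eq_inner, cnormSq_eq_norm_sq, cnormSq_eq_norm_sq, Real.sqrt_sq (norm_nonneg _),
    Real.sqrt_sq (norm_nonneg _), mul_comm]
  exact norm_inner_le_norm _ _

lemma kappaAlpha_eq_smul {n : ℕ} (x : Fin n → ℂ) :
    kappaAlpha x = (√(cnormSq x))⁻¹ • vecMulVec x (star x) := by
  unfold kappaAlpha
  split_ifs with hx
  · simp [hx]
  · rfl

lemma sum_normSq_smul_vecMulVec_sub {n : ℕ} (c d : ℝ) (x y : Fin n → ℂ) :
    ∑ i, ∑ j, Complex.normSq ((c • vecMulVec x (star x) - d • vecMulVec y (star y)) i j)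
      = c ^ 2 * cnormSq x ^ 2 + d ^ 2 * cnormSq y ^ 2 - 2 * (c * d) * Complex.normSq (cip x y) := by
  have entry : ∀ i j,
      Complex.normSq ((c • vecMulVec x (star x) - d • vecMulVec y (star y)) i j)
        = c ^ 2 * (Complex.normSq (x i) * Complex.normSq (x j))
          + d ^ 2 * (Complex.normSq (y i) * Complex.normSq (y j))
          - 2 * (c * d) * (x i * starRingEnd ℂ (y i) * starRingEnd ℂ (x j * starRingEnd ℂ (y j))).re := by
    intro i j
    simp only [Matrix.sub_apply, Matrix.smul_apply, vecMulVec_apply, Pi.star_apply, Complex.real_smul,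
      Complex.star_def, Complex.normSq_sub, Complex.normSq_ofReal,
      Complex.normSq_conj, map_mul, Complex.conj_ofReal, Complex.conj_conj]
    rw [show (c : ℂ) * (x i * (starRingEnd ℂ) (x j)) * (d * ((starRingEnd ℂ) (y i) * y j))
        = ((c * d : ℝ) : ℂ) * (x i * (starRingEnd ℂ) (y i) * ((starRingEnd ℂ) (x j) * y j)) by
      push_cast; ring, Complex.re_ofReal_mul]
    ring
  simp only [entry, Finset.sum_sub_distrib, Finset.sum_add_distrib, ← Finset.mul_sum,
    ← Finset.sum_mul, ← Complex.re_sum, ← map_sum]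
  rw [← cip, Complex.mul_conj, Complex.ofReal_re, cnormSq, cnormSq]
  ring

lemma inv_sq_mul_sq_sq (a : ℝ) : a⁻¹ ^ 2 * (a ^ 2) ^ 2 = a ^ 2 := by
  rcases eq_or_ne a 0 with rfl | ha
  · simp
  · field_simp

/-- If `x = 0` or `y = 0`, the quotient is `0` by Lean's convention, matching `κ_α(0) = 0`. -/
lemma frob_kappaAlpha_sub {n : ℕ} (x y : Fin n → ℂ) :
    frob (kappaAlpha x - kappaAlpha y) = √(cnormSq x + cnormSq y
      - 2 * (‖cip x y‖ ^ 2 / (√(cnormSq x) * √(cnormSq y)))) := by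
  rw [frob, kappaAlpha_eq_smul, kappaAlpha_eq_smul, sum_normSq_smul_vecMulVec_sub,
    Complex.normSq_eq_norm_sq, ← Real.sq_sqrt (cnormSq_nonneg x), ← Real.sq_sqrt (cnormSq_nonneg y),
    Real.sqrt_sq (Real.sqrt_nonneg _), Real.sqrt_sq (Real.sqrt_nonneg _),
    inv_sq_mul_sq_sq, inv_sq_mul_sq_sq]
  ring_nf

lemma sq_div_le_self {t p : ℝ} (ht : 0 ≤ t) (htp : t ≤ p) : t ^ 2 / p ≤ t :=
  div_le_of_le_mul₀ (ht.trans htp) ht (by nlinarith)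

lemma four_mul_le_two_mul_add_sq_div {t p : ℝ} (ht : 0 ≤ t) (htp : t ≤ p) :
    4 * t ≤ 2 * p + 2 * (t ^ 2 / p) := by
  rcases (ht.trans htp).eq_or_lt with rfl | hp
  · simp [le_antisymm htp ht]
  · have h : 2 * p + 2 * (t ^ 2 / p) - 4 * t = 2 * (p - t) ^ 2 / p := by
      field_simp
      ring
    linarith [show 0 ≤ 2 * (p - t) ^ 2 / p by positivity]

theorem kappaAlpha_biLipschitz {n : ℕ} (x y : Fin n → ℂ) :
    D2 x y ≤ frob (kappaAlpha x - kappaAlpha y) ∧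
    frob (kappaAlpha x - kappaAlpha y) ≤ Real.sqrt 2 * D2 x y := by
  have hCS : ‖cip x y‖ ≤ √(cnormSq x) * √(cnormSq y) := norm_cip_le x y
  have ht : 0 ≤ ‖cip x y‖ := norm_nonneg _
  have hAMGM : 2 * (√(cnormSq x) * √(cnormSq y)) ≤ cnormSq x + cnormSq y := by
    nlinarith [sq_nonneg (√(cnormSq x) - √(cnormSq y)), Real.sq_sqrt (cnormSq_nonneg x),
      Real.sq_sqrt (cnormSq_nonneg y)]
  rw [frob_kappaAlpha_sub, D2, ← Real.sqrt_mul zero_le_two]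
  constructor <;> apply Real.sqrt_le_sqrt
  · linarith [sq_div_le_self ht hCS]
  · linarith [four_mul_le_two_mul_add_sq_div ht hCS]
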